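/- arXiv:2305.16483 — 2 statements merged into one kernel-verified Lean document; each statement's English description precedes it below -/
import Mathlib

section
/- Let ξ and μ be distributions on S×X×A, β a distribution on X, B ⊆ X, m a positive integer, σ₁ > 0, σ₂ ≥ 0, C ≥ 0, V_max ≥ 0, and let Q* : S×X×A → ℝ satisfy Q* = T Q*. Assume: (i) ξ(s,a) ≤ C·μ(s,a) for all (s,a) (marginals); (ii) Σ_{(s,x,a): x ∉ B} ξ(s,x,a) ≤ σ₂; (iii) β(x) ≥ σ₁ for all x ∈ B; (iv) |f_k(s,x,a) − Q*(s,x,a)| ≤ V_max for all (s,x,a). Then for all f_k, f_{k−1} : S×X×A → ℝ satisfying (iv), ‖f_k − Q*‖_{2,ξ} ≤ sqrt((m+1)C/(m σ₁)) · ‖f_k − T f_{k−1}‖_{2, μ̄_β, B} + γ · ‖f_{k−1} − Q*‖_{2, P(ξ)×π_{f_{k−1},Q*}} + sqrt(σ₂) · V_max. -/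
open Finset

section Defs

variable {S X A : Type*} [Fintype S] [Fintype X] [Fintype A]

/-- A distribution on `S × X × A`, written in curried form. -/
def IsDist3 (ν : S → X → A → ℝ) : Prop :=
  (∀ s x a, 0 ≤ ν s x a) ∧ ∑ s, ∑ x, ∑ a, ν s x a = 1

/-- A distribution on `X`. -/
def IsDist1 (β : X → ℝ) : Prop := (∀ x, 0 ≤ β x) ∧ ∑ x, β x = 1

/-- A distribution on `S × X`. -/
def IsDist2 (η : S → X → ℝ) : Prop := (∀ s x, 0 ≤ η s x) ∧ ∑ s, ∑ x, η s x = 1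

/-- A Markov transition kernel `P(·|s,a)` on `S`. -/
def IsKernel (P : S → A → S → ℝ) : Prop :=
  (∀ s a s', 0 ≤ P s a s') ∧ ∀ s a, ∑ s', P s a s' = 1

/-- The `(s,a)`-marginal of a distribution on `S × X × A`. -/
def marginal (ν : S → X → A → ℝ) (s : S) (a : A) : ℝ := ∑ x, ν s x a

/-- The augmented distribution `μ̄_β` after generating `m` virtual samples per real sample. -/
noncomputable def augDist (μ : S → X → A → ℝ) (β : X → ℝ) (m : ℕ) (s : S) (x : X) (a : A) : ℝ :=
  (1 / ((m : ℝ) + 1)) * μ s x a + ((m : ℝ) / ((m : ℝ) + 1)) * marginal μ s a * β x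

/-- The weighted `L²(ν)` norm of `f : S × X × A → ℝ`. -/
noncomputable def norm2 (ν : S → X → A → ℝ) (f : S → X → A → ℝ) : ℝ :=
  Real.sqrt (∑ s, ∑ x, ∑ a, ν s x a * f s x a ^ 2)

/-- The `B`-restricted weighted `L²(ν)` norm (sum only over `x ∈ B`). -/
noncomputable def norm2B (ν : S → X → A → ℝ) (B : Finset X) (f : S → X → A → ℝ) : ℝ :=
  Real.sqrt (∑ s, ∑ x ∈ B, ∑ a, ν s x a * f s x a ^ 2)

/-- The weighted `L²(η)` norm of `h : S × X → ℝ`. -/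
noncomputable def norm2SX (η : S → X → ℝ) (h : S → X → ℝ) : ℝ :=
  Real.sqrt (∑ s, ∑ x, η s x * h s x ^ 2)

/-- `V_f(s,x) := min_{a ∈ A} f(s,x,a)`. -/
noncomputable def Vmin [Nonempty A] (f : S → X → A → ℝ) (s : S) (x : X) : ℝ :=
  Finset.univ.inf' Finset.univ_nonempty (f s x)

/-- The Bellman (optimality) operator `(T f)(s,x,a) = R(s,x,a) + γ Σ_{s'} P(s'|s,a) V_f(s', g(s,x,a,s'))`. -/
noncomputable def bellman [Nonempty A] (P : S → A → S → ℝ) (g : S → X → A → S → X)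
    (R : S → X → A → ℝ) (γ : ℝ) (f : S → X → A → ℝ) (s : S) (x : X) (a : A) : ℝ :=
  R s x a + γ * ∑ s', P s a s' * Vmin f s' (g s x a s')

/-- The pushforward distribution `P(ν)` on `S × X`. -/
noncomputable def pushforward [DecidableEq X] (P : S → A → S → ℝ) (g : S → X → A → S → X)
    (ν : S → X → A → ℝ) (s' : S) (x' : X) : ℝ :=
  ∑ s, ∑ x, ∑ a, ν s x a * P s a s' * (if x' = g s x a s' then 1 else 0)

/-- The product distribution `η × π` on `S × X × A` of a state distribution and a
deterministic policy. -/
def prodPolicy [DecidableEq A] (η : S → X → ℝ) (π : S → X → A) (s : S) (x : X) (a : A) : ℝ :=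
  η s x * (if a = π s x then 1 else 0)

/-- `π` is a selection of `argmin_a min{f(s,x,a), f'(s,x,a)}`. -/
def IsMinSelection (f f' : S → X → A → ℝ) (π : S → X → A) : Prop :=
  ∀ s x a, min (f s x (π s x)) (f' s x (π s x)) ≤ min (f s x a) (f' s x a)

end Defs


private lemma my_sqrt_add_le (x y : ℝ) (hx : 0 ≤ x) (hy : 0 ≤ y) :
    Real.sqrt (x + y) ≤ Real.sqrt x + Real.sqrt y := by
  have h1 := Real.sq_sqrt hx
  have h2 := Real.sq_sqrt hy
  have h3 := Real.sqrt_nonneg x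
  have h4 := Real.sqrt_nonneg y
  have h : x + y ≤ (Real.sqrt x + Real.sqrt y) ^ 2 := by nlinarith
  calc Real.sqrt (x + y) ≤ Real.sqrt ((Real.sqrt x + Real.sqrt y) ^ 2) := Real.sqrt_le_sqrt h
    _ = Real.sqrt x + Real.sqrt y := Real.sqrt_sq (by positivity)

private lemma my_weighted_cs {ι : Type*} (s : Finset ι) (w u v : ι → ℝ)
    (hw : ∀ i ∈ s, 0 ≤ w i) :
    ∑ i ∈ s, w i * (u i * v i)
      ≤ Real.sqrt (∑ i ∈ s, w i * u i ^ 2) * Real.sqrt (∑ i ∈ s, w i * v i ^ 2) := by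
  have hb : 0 ≤ ∑ i ∈ s, w i * u i ^ 2 :=
    Finset.sum_nonneg fun i hi => mul_nonneg (hw i hi) (sq_nonneg _)
  have key := Finset.sum_mul_sq_le_sq_mul_sq s (fun i => Real.sqrt (w i) * u i)
      (fun i => Real.sqrt (w i) * v i)
  have e1 : ∑ i ∈ s, (Real.sqrt (w i) * u i) * (Real.sqrt (w i) * v i)
      = ∑ i ∈ s, w i * (u i * v i) := by
    refine Finset.sum_congr rfl fun i hi => ?_
    rw [show (Real.sqrt (w i) * u i) * (Real.sqrt (w i) * v i)
        = (Real.sqrt (w i) * Real.sqrt (w i)) * (u i * v i) by ring,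
      Real.mul_self_sqrt (hw i hi)]
  have e2 : ∑ i ∈ s, (Real.sqrt (w i) * u i) ^ 2 = ∑ i ∈ s, w i * u i ^ 2 := by
    refine Finset.sum_congr rfl fun i hi => ?_
    rw [mul_pow, Real.sq_sqrt (hw i hi)]
  have e3 : ∑ i ∈ s, (Real.sqrt (w i) * v i) ^ 2 = ∑ i ∈ s, w i * v i ^ 2 := by
    refine Finset.sum_congr rfl fun i hi => ?_
    rw [mul_pow, Real.sq_sqrt (hw i hi)]
  rw [e1, e2, e3] at key
  calc ∑ i ∈ s, w i * (u i * v i) ≤ |∑ i ∈ s, w i * (u i * v i)| := le_abs_self _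
    _ = Real.sqrt ((∑ i ∈ s, w i * (u i * v i)) ^ 2) := (Real.sqrt_sq_eq_abs _).symm
    _ ≤ Real.sqrt ((∑ i ∈ s, w i * u i ^ 2) * (∑ i ∈ s, w i * v i ^ 2)) :=
        Real.sqrt_le_sqrt key
    _ = _ := Real.sqrt_mul hb _

private lemma my_weighted_minkowski {ι : Type*} (s : Finset ι) (w u v : ι → ℝ)
    (hw : ∀ i ∈ s, 0 ≤ w i) :
    Real.sqrt (∑ i ∈ s, w i * (u i + v i) ^ 2)
      ≤ Real.sqrt (∑ i ∈ s, w i * u i ^ 2) + Real.sqrt (∑ i ∈ s, w i * v i ^ 2) := by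
  have cs := my_weighted_cs s w u v hw
  have hb : 0 ≤ ∑ i ∈ s, w i * u i ^ 2 :=
    Finset.sum_nonneg fun i hi => mul_nonneg (hw i hi) (sq_nonneg _)
  have hc : 0 ≤ ∑ i ∈ s, w i * v i ^ 2 :=
    Finset.sum_nonneg fun i hi => mul_nonneg (hw i hi) (sq_nonneg _)
  have expand : ∑ i ∈ s, w i * (u i + v i) ^ 2
      = ∑ i ∈ s, w i * u i ^ 2 + 2 * ∑ i ∈ s, w i * (u i * v i) + ∑ i ∈ s, w i * v i ^ 2 := by
    rw [Finset.sum_congr rfl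
      (show ∀ i ∈ s, w i * (u i + v i) ^ 2
        = w i * u i ^ 2 + 2 * (w i * (u i * v i)) + w i * v i ^ 2 from fun i _ => by ring),
      Finset.sum_add_distrib, Finset.sum_add_distrib, ← Finset.mul_sum]
  have s1 := Real.sq_sqrt hb
  have s2 := Real.sq_sqrt hc
  have hsq : ∑ i ∈ s, w i * (u i + v i) ^ 2
      ≤ (Real.sqrt (∑ i ∈ s, w i * u i ^ 2) + Real.sqrt (∑ i ∈ s, w i * v i ^ 2)) ^ 2 := by
    rw [expand]; nlinarith [cs]
  calc Real.sqrt (∑ i ∈ s, w i * (u i + v i) ^ 2)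
      ≤ Real.sqrt ((Real.sqrt (∑ i ∈ s, w i * u i ^ 2)
          + Real.sqrt (∑ i ∈ s, w i * v i ^ 2)) ^ 2) := Real.sqrt_le_sqrt hsq
    _ = _ := Real.sqrt_sq (by positivity)

private lemma my_jensen_sq {ι : Type*} (s : Finset ι) (p q : ι → ℝ)
    (hp : ∀ i ∈ s, 0 ≤ p i) (hp1 : ∑ i ∈ s, p i = 1) :
    (∑ i ∈ s, p i * q i) ^ 2 ≤ ∑ i ∈ s, p i * q i ^ 2 := by
  have key := Finset.sum_mul_sq_le_sq_mul_sq s (fun i => Real.sqrt (p i))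
      (fun i => Real.sqrt (p i) * q i)
  have e1 : ∑ i ∈ s, Real.sqrt (p i) * (Real.sqrt (p i) * q i) = ∑ i ∈ s, p i * q i := by
    refine Finset.sum_congr rfl fun i hi => ?_
    rw [← mul_assoc, Real.mul_self_sqrt (hp i hi)]
  have e2 : ∑ i ∈ s, Real.sqrt (p i) ^ 2 = ∑ i ∈ s, p i :=
    Finset.sum_congr rfl fun i hi => Real.sq_sqrt (hp i hi)
  have e3 : ∑ i ∈ s, (Real.sqrt (p i) * q i) ^ 2 = ∑ i ∈ s, p i * q i ^ 2 := by
    refine Finset.sum_congr rfl fun i hi => ?_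
    rw [mul_pow, Real.sq_sqrt (hp i hi)]
  rw [e1, e2, e3, hp1, one_mul] at key
  exact key

private lemma my_comm2 {α β : Type*} [Fintype α] [Fintype β] (f : α → β → ℝ) :
    ∑ p : α × β, f p.1 p.2 = ∑ q : β × α, f q.2 q.1 := by
  rw [Fintype.sum_prod_type, Fintype.sum_prod_type]
  exact Finset.sum_comm

private lemma my_swap5 {S X A : Type*} [Fintype S] [Fintype X] [Fintype A]
    (F : S → X → A → S → X → ℝ) :
    ∑ s, ∑ x, ∑ a, ∑ s', ∑ x', F s x a s' x'
      = ∑ s', ∑ x', ∑ s, ∑ x, ∑ a, F s x a s' x' := by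
  have c1 : ∑ p : (S × X × A) × (S × X), F p.1.1 p.1.2.1 p.1.2.2 p.2.1 p.2.2
      = ∑ s, ∑ x, ∑ a, ∑ s', ∑ x', F s x a s' x' := by
    simp only [Fintype.sum_prod_type]
  have c2 : ∑ q : (S × X) × (S × X × A), F q.2.1 q.2.2.1 q.2.2.2 q.1.1 q.1.2
      = ∑ s', ∑ x', ∑ s, ∑ x, ∑ a, F s x a s' x' := by
    simp only [Fintype.sum_prod_type]
  rw [← c1, ← c2]
  exact my_comm2 (fun (p : S × X × A) (q : S × X) => F p.1 p.2.1 p.2.2 q.1 q.2)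

private lemma my_sum3B {S X A : Type*} [Fintype S] [Fintype X] [Fintype A]
    (B : Finset X) (F : S → X → A → ℝ) :
    ∑ s, ∑ x ∈ B, ∑ a, F s x a
      = ∑ p ∈ ((Finset.univ : Finset S) ×ˢ B ×ˢ (Finset.univ : Finset A)), F p.1 p.2.1 p.2.2 := by
  simp only [Finset.sum_product]

private lemma my_vmin_abs {S X A : Type*} [Fintype S] [Fintype X] [Fintype A] [Nonempty A]
    (f f' : S → X → A → ℝ) (π : S → X → A) (hπ : IsMinSelection f f' π) (s : S) (x : X) :
    |Vmin f s x - Vmin f' s x| ≤ |f s x (π s x) - f' s x (π s x)| := by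
  have h1 : Vmin f s x ≤ f s x (π s x) := Finset.inf'_le _ (Finset.mem_univ _)
  have h2 : Vmin f' s x ≤ f' s x (π s x) := Finset.inf'_le _ (Finset.mem_univ _)
  have h3 : min (f s x (π s x)) (f' s x (π s x)) ≤ Vmin f s x :=
    Finset.le_inf' _ _ fun a _ => le_trans (hπ s x a) (min_le_left _ _)
  have h4 : min (f s x (π s x)) (f' s x (π s x)) ≤ Vmin f' s x :=
    Finset.le_inf' _ _ fun a _ => le_trans (hπ s x a) (min_le_right _ _)
  have ha := le_abs_self (f s x (π s x) - f' s x (π s x))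
  have hb := neg_abs_le (f s x (π s x) - f' s x (π s x))
  have hcc := abs_nonneg (f s x (π s x) - f' s x (π s x))
  rw [abs_le]
  rcases min_cases (f s x (π s x)) (f' s x (π s x)) with ⟨he, _⟩ | ⟨he, _⟩ <;>
    rw [he] at h3 h4 <;> exact ⟨by linarith, by linarith⟩

/-- Eq. (S.16): combining the typical/atypical split with the
change-of-measure bound. -/
theorem statement12 {S X A : Type*} [Fintype S] [Fintype X] [Fintype A]
    [Nonempty S] [Nonempty X] [Nonempty A] [DecidableEq X] [DecidableEq A]
    (P : S → A → S → ℝ) (g : S → X → A → S → X) (R : S → X → A → ℝ) (γ : ℝ)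
    (hP : IsKernel P) (hγ0 : 0 ≤ γ) (hγ1 : γ < 1)
    (ξ μ : S → X → A → ℝ) (β : X → ℝ) (B : Finset X) (m : ℕ)
    (σ1 σ2 C Vmax : ℝ)
    (hξ : IsDist3 ξ) (hμ : IsDist3 μ) (hβ : IsDist1 β)
    (hm : 0 < m) (hσ1 : 0 < σ1) (hσ2 : 0 ≤ σ2) (hC : 0 ≤ C) (hV : 0 ≤ Vmax)
    (Q : S → X → A → ℝ) (hQ : ∀ s x a, Q s x a = bellman P g R γ Q s x a)
    (hcov : ∀ s a, marginal ξ s a ≤ C * marginal μ s a)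
    (htail : ∑ s, ∑ x ∈ Bᶜ, ∑ a, ξ s x a ≤ σ2)
    (hβB : ∀ x ∈ B, σ1 ≤ β x) :
    ∀ (fk fkm1 : S → X → A → ℝ) (π : S → X → A), IsMinSelection fkm1 Q π →
      (∀ s x a, |fk s x a - Q s x a| ≤ Vmax) →
      norm2 ξ (fun s x a => fk s x a - Q s x a)
        ≤ Real.sqrt (((m : ℝ) + 1) * C / ((m : ℝ) * σ1))
            * norm2B (augDist μ β m) B
                (fun s x a => fk s x a - bellman P g R γ fkm1 s x a)
          + γ * norm2 (prodPolicy (pushforward P g ξ) π)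
              (fun s x a => fkm1 s x a - Q s x a)
          + Real.sqrt σ2 * Vmax := by
  intro fk fkm1 π hπ hbd
  classical
  obtain ⟨hξ0, hξ1⟩ := hξ
  obtain ⟨hμ0, hμ1⟩ := hμ
  obtain ⟨hβ0, hβ1⟩ := hβ
  obtain ⟨hP0, hP1⟩ := hP
  have hm' : (0:ℝ) < (m:ℝ) := by exact_mod_cast hm
  set c : ℝ := ((m : ℝ) + 1) * C / ((m : ℝ) * σ1) with hc_def
  have hc0 : 0 ≤ c := by positivity
  set K : Finset (S × X × A) :=
    (Finset.univ : Finset S) ×ˢ B ×ˢ (Finset.univ : Finset A) with hK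
  have hKmem : ∀ p ∈ K, p.2.1 ∈ B := by
    intro p hp
    rw [hK, Finset.mem_product] at hp
    exact (Finset.mem_product.mp hp.2).1
  have hmarg0 : ∀ s a, 0 ≤ marginal μ s a :=
    fun s a => Finset.sum_nonneg fun i _ => hμ0 s i a
  -- domination on B
  have hdom : ∀ s x a, x ∈ B → ξ s x a ≤ c * augDist μ β m s x a := by
    intro s x a hx
    have h1 : ξ s x a ≤ marginal ξ s a :=
      Finset.single_le_sum (fun i _ => hξ0 s i a) (Finset.mem_univ x)
    have h2 := hcov s a
    have h3 : σ1 ≤ β x := hβB x hx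
    have h4 := hmarg0 s a
    have hσ1' : σ1 ≠ 0 := ne_of_gt hσ1
    have hm0' : (m:ℝ) ≠ 0 := ne_of_gt hm'
    have key : C * marginal μ s a
        = c * (((m:ℝ) / ((m:ℝ) + 1)) * marginal μ s a * σ1) := by
      rw [hc_def]; field_simp
    have t0 : (0:ℝ) ≤ (m:ℝ) / ((m:ℝ) + 1) := by positivity
    have t2 : ((m:ℝ)/((m:ℝ)+1)) * marginal μ s a * σ1
        ≤ ((m:ℝ)/((m:ℝ)+1)) * marginal μ s a * β x :=
      mul_le_mul_of_nonneg_left h3 (mul_nonneg t0 h4)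
    have t1 : 0 ≤ (1 / ((m:ℝ)+1)) * μ s x a := mul_nonneg (by positivity) (hμ0 s x a)
    have t3 : ((m:ℝ)/((m:ℝ)+1)) * marginal μ s a * β x ≤ augDist μ β m s x a := by
      unfold augDist; linarith
    have h5 : c * (((m:ℝ)/((m:ℝ)+1)) * marginal μ s a * σ1)
        ≤ c * augDist μ β m s x a :=
      mul_le_mul_of_nonneg_left (le_trans t2 t3) hc0
    linarith
  -- Bellman difference
  set Δ : S → X → ℝ := fun s' x' => Vmin fkm1 s' x' - Vmin Q s' x' with hΔ
  have hE2eq : ∀ s x a, bellman P g R γ fkm1 s x a - Q s x a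
      = γ * ∑ s', P s a s' * Δ s' (g s x a s') := by
    intro s x a
    rw [hQ s x a]
    simp only [bellman, hΔ]
    rw [show ∑ s', P s a s' * (Vmin fkm1 s' (g s x a s') - Vmin Q s' (g s x a s'))
        = ∑ s', P s a s' * Vmin fkm1 s' (g s x a s')
          - ∑ s', P s a s' * Vmin Q s' (g s x a s') by
      rw [← Finset.sum_sub_distrib]
      exact Finset.sum_congr rfl fun s' _ => mul_sub _ _ _]
    ring
  -- pointwise |Δ| ≤ |G(π)|
  have hVabs : ∀ s' x', (Δ s' x')^2
      ≤ (fkm1 s' x' (π s' x') - Q s' x' (π s' x'))^2 := by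
    intro s' x'
    have h := my_vmin_abs fkm1 Q π hπ s' x'
    calc (Δ s' x')^2 = |Δ s' x'|^2 := (sq_abs _).symm
      _ ≤ |fkm1 s' x' (π s' x') - Q s' x' (π s' x')|^2 := by
          simp only [hΔ]
          exact pow_le_pow_left₀ (abs_nonneg _) h 2
      _ = _ := sq_abs _
  have hpush0 : ∀ s' x', 0 ≤ pushforward P g ξ s' x' := by
    intro s' x'
    refine Finset.sum_nonneg fun s _ => Finset.sum_nonneg fun x _ =>
      Finset.sum_nonneg fun a _ => ?_
    have hite : (0:ℝ) ≤ if x' = g s x a s' then 1 else 0 := by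
      split <;> norm_num
    exact mul_nonneg (mul_nonneg (hξ0 s x a) (hP0 s a s')) hite
  -- the policy norm
  have hnormπ : norm2 (prodPolicy (pushforward P g ξ) π) (fun s x a => fkm1 s x a - Q s x a)
      = Real.sqrt (∑ s', ∑ x', pushforward P g ξ s' x'
          * (fkm1 s' x' (π s' x') - Q s' x' (π s' x'))^2) := by
    simp only [norm2]
    congr 1
    refine Finset.sum_congr rfl fun s' _ => Finset.sum_congr rfl fun x' _ => ?_
    have h := Finset.sum_ite_eq' (Finset.univ : Finset A) (π s' x')
      (fun a => pushforward P g ξ s' x' * (fkm1 s' x' a - Q s' x' a)^2)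
    simp only [Finset.mem_univ, if_true] at h
    rw [← h]
    refine Finset.sum_congr rfl fun a _ => ?_
    by_cases hh : a = π s' x' <;> simp [prodPolicy, hh]
  -- core Bellman bound
  have hcore : ∑ s, ∑ x, ∑ a, ξ s x a * (bellman P g R γ fkm1 s x a - Q s x a)^2
      ≤ γ^2 * ∑ s', ∑ x', pushforward P g ξ s' x'
          * (fkm1 s' x' (π s' x') - Q s' x' (π s' x'))^2 := by
    have step1 : ∑ s, ∑ x, ∑ a, ξ s x a * (bellman P g R γ fkm1 s x a - Q s x a)^2
        ≤ γ^2 * ∑ s, ∑ x, ∑ a, ξ s x a * ∑ s', P s a s' * (Δ s' (g s x a s'))^2 := by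
      rw [Finset.mul_sum]
      refine Finset.sum_le_sum fun s _ => ?_
      rw [Finset.mul_sum]
      refine Finset.sum_le_sum fun x _ => ?_
      rw [Finset.mul_sum]
      refine Finset.sum_le_sum fun a _ => ?_
      rw [hE2eq s x a]
      have hj := my_jensen_sq Finset.univ (P s a) (fun s' => Δ s' (g s x a s'))
        (fun s' _ => hP0 s a s') (hP1 s a)
      have hj2 := mul_le_mul_of_nonneg_left hj (hξ0 s x a)
      calc ξ s x a * (γ * ∑ s', P s a s' * Δ s' (g s x a s'))^2
          = γ^2 * (ξ s x a * (∑ s', P s a s' * Δ s' (g s x a s'))^2) := by ring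
        _ ≤ γ^2 * (ξ s x a * ∑ s', P s a s' * (Δ s' (g s x a s'))^2) :=
            mul_le_mul_of_nonneg_left hj2 (sq_nonneg γ)
    have inner : ∀ s x a s', ξ s x a * (P s a s' * (Δ s' (g s x a s'))^2)
        = ∑ x', ξ s x a * P s a s' * (if x' = g s x a s' then 1 else 0) * (Δ s' x')^2 := by
      intro s x a s'
      have h := Finset.sum_ite_eq' (Finset.univ : Finset X) (g s x a s')
        (fun x' => ξ s x a * P s a s' * (Δ s' x')^2)
      simp only [Finset.mem_univ, if_true] at h
      calc ξ s x a * (P s a s' * (Δ s' (g s x a s'))^2)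
          = ξ s x a * P s a s' * (Δ s' (g s x a s'))^2 := by ring
        _ = ∑ x', if x' = g s x a s' then ξ s x a * P s a s' * (Δ s' x')^2 else 0 := h.symm
        _ = _ := by
            refine Finset.sum_congr rfl fun x' _ => ?_
            by_cases hh : x' = g s x a s' <;> simp [hh]
    have step2 : ∑ s, ∑ x, ∑ a, ξ s x a * ∑ s', P s a s' * (Δ s' (g s x a s'))^2
        = ∑ s', ∑ x', pushforward P g ξ s' x' * (Δ s' x')^2 := by
      calc ∑ s, ∑ x, ∑ a, ξ s x a * ∑ s', P s a s' * (Δ s' (g s x a s'))^2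
          = ∑ s, ∑ x, ∑ a, ∑ s', ∑ x',
              ξ s x a * P s a s' * (if x' = g s x a s' then 1 else 0) * (Δ s' x')^2 := by
            refine Finset.sum_congr rfl fun s _ => Finset.sum_congr rfl fun x _ =>
              Finset.sum_congr rfl fun a _ => ?_
            rw [Finset.mul_sum]
            exact Finset.sum_congr rfl fun s' _ => inner s x a s'
        _ = ∑ s', ∑ x', ∑ s, ∑ x, ∑ a,
              ξ s x a * P s a s' * (if x' = g s x a s' then 1 else 0) * (Δ s' x')^2 :=
            my_swap5 _
        _ = ∑ s', ∑ x', pushforward P g ξ s' x' * (Δ s' x')^2 := by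
            refine Finset.sum_congr rfl fun s' _ => Finset.sum_congr rfl fun x' _ => ?_
            simp only [pushforward, Finset.sum_mul]
    have step3 : ∑ s', ∑ x', pushforward P g ξ s' x' * (Δ s' x')^2
        ≤ ∑ s', ∑ x', pushforward P g ξ s' x'
            * (fkm1 s' x' (π s' x') - Q s' x' (π s' x'))^2 :=
      Finset.sum_le_sum fun s' _ => Finset.sum_le_sum fun x' _ =>
        mul_le_mul_of_nonneg_left (hVabs s' x') (hpush0 s' x')
    calc ∑ s, ∑ x, ∑ a, ξ s x a * (bellman P g R γ fkm1 s x a - Q s x a)^2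
        ≤ γ^2 * ∑ s, ∑ x, ∑ a, ξ s x a * ∑ s', P s a s' * (Δ s' (g s x a s'))^2 := step1
      _ = γ^2 * ∑ s', ∑ x', pushforward P g ξ s' x' * (Δ s' x')^2 := by rw [step2]
      _ ≤ _ := mul_le_mul_of_nonneg_left step3 (sq_nonneg γ)
  -- step E : B-restricted sum ≤ full sum ≤ γ² NG
  have hKsub : K ⊆ (Finset.univ : Finset S) ×ˢ (Finset.univ : Finset X) ×ˢ (Finset.univ : Finset A) := by
    rw [hK]
    exact Finset.product_subset_product (Finset.Subset.refl _)
      (Finset.product_subset_product (Finset.subset_univ B) (Finset.Subset.refl _))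
  have hBtoFull : ∑ p ∈ K, ξ p.1 p.2.1 p.2.2
        * (bellman P g R γ fkm1 p.1 p.2.1 p.2.2 - Q p.1 p.2.1 p.2.2)^2
      ≤ ∑ s, ∑ x, ∑ a, ξ s x a * (bellman P g R γ fkm1 s x a - Q s x a)^2 := by
    rw [my_sum3B (Finset.univ : Finset X)
      (fun s x a => ξ s x a * (bellman P g R γ fkm1 s x a - Q s x a)^2)]
    exact Finset.sum_le_sum_of_subset_of_nonneg hKsub
      (fun p _ _ => mul_nonneg (hξ0 _ _ _) (sq_nonneg _))
  have stepE : Real.sqrt (∑ p ∈ K, ξ p.1 p.2.1 p.2.2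
        * (bellman P g R γ fkm1 p.1 p.2.1 p.2.2 - Q p.1 p.2.1 p.2.2)^2)
      ≤ γ * norm2 (prodPolicy (pushforward P g ξ) π) (fun s x a => fkm1 s x a - Q s x a) := by
    calc Real.sqrt (∑ p ∈ K, ξ p.1 p.2.1 p.2.2
          * (bellman P g R γ fkm1 p.1 p.2.1 p.2.2 - Q p.1 p.2.1 p.2.2)^2)
        ≤ Real.sqrt (γ^2 * ∑ s', ∑ x', pushforward P g ξ s' x'
            * (fkm1 s' x' (π s' x') - Q s' x' (π s' x'))^2) :=
          Real.sqrt_le_sqrt (le_trans hBtoFull hcore)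
      _ = γ * Real.sqrt (∑ s', ∑ x', pushforward P g ξ s' x'
            * (fkm1 s' x' (π s' x') - Q s' x' (π s' x'))^2) := by
          rw [Real.sqrt_mul (sq_nonneg γ), Real.sqrt_sq hγ0]
      _ = _ := by rw [hnormπ]
  -- step D : change of measure
  have stepD : Real.sqrt (∑ p ∈ K, ξ p.1 p.2.1 p.2.2
        * (fk p.1 p.2.1 p.2.2 - bellman P g R γ fkm1 p.1 p.2.1 p.2.2)^2)
      ≤ Real.sqrt c * norm2B (augDist μ β m) B
          (fun s x a => fk s x a - bellman P g R γ fkm1 s x a) := by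
    have hmono : ∑ p ∈ K, ξ p.1 p.2.1 p.2.2
          * (fk p.1 p.2.1 p.2.2 - bellman P g R γ fkm1 p.1 p.2.1 p.2.2)^2
        ≤ c * ∑ p ∈ K, augDist μ β m p.1 p.2.1 p.2.2
          * (fk p.1 p.2.1 p.2.2 - bellman P g R γ fkm1 p.1 p.2.1 p.2.2)^2 := by
      rw [Finset.mul_sum]
      refine Finset.sum_le_sum fun p hp => ?_
      have h := hdom p.1 p.2.1 p.2.2 (hKmem p hp)
      calc ξ p.1 p.2.1 p.2.2 * (fk p.1 p.2.1 p.2.2 - bellman P g R γ fkm1 p.1 p.2.1 p.2.2)^2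
          ≤ (c * augDist μ β m p.1 p.2.1 p.2.2)
            * (fk p.1 p.2.1 p.2.2 - bellman P g R γ fkm1 p.1 p.2.1 p.2.2)^2 :=
            mul_le_mul_of_nonneg_right h (sq_nonneg _)
        _ = _ := by ring
    calc Real.sqrt (∑ p ∈ K, ξ p.1 p.2.1 p.2.2
          * (fk p.1 p.2.1 p.2.2 - bellman P g R γ fkm1 p.1 p.2.1 p.2.2)^2)
        ≤ Real.sqrt (c * ∑ p ∈ K, augDist μ β m p.1 p.2.1 p.2.2
            * (fk p.1 p.2.1 p.2.2 - bellman P g R γ fkm1 p.1 p.2.1 p.2.2)^2) :=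
          Real.sqrt_le_sqrt hmono
      _ = Real.sqrt c * Real.sqrt (∑ p ∈ K, augDist μ β m p.1 p.2.1 p.2.2
            * (fk p.1 p.2.1 p.2.2 - bellman P g R γ fkm1 p.1 p.2.1 p.2.2)^2) :=
          Real.sqrt_mul hc0 _
      _ = _ := by
          simp only [norm2B]
          rw [my_sum3B B (fun s x a => augDist μ β m s x a
            * (fk s x a - bellman P g R γ fkm1 s x a)^2), hK]
  -- Minkowski on B part
  have mink := my_weighted_minkowski K (fun p => ξ p.1 p.2.1 p.2.2)
      (fun p => fk p.1 p.2.1 p.2.2 - bellman P g R γ fkm1 p.1 p.2.1 p.2.2)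
      (fun p => bellman P g R γ fkm1 p.1 p.2.1 p.2.2 - Q p.1 p.2.1 p.2.2)
      (fun p _ => hξ0 _ _ _)
  have hsum_eq : ∑ p ∈ K, ξ p.1 p.2.1 p.2.2
        * ((fk p.1 p.2.1 p.2.2 - bellman P g R γ fkm1 p.1 p.2.1 p.2.2)
          + (bellman P g R γ fkm1 p.1 p.2.1 p.2.2 - Q p.1 p.2.1 p.2.2))^2
      = ∑ p ∈ K, ξ p.1 p.2.1 p.2.2 * (fk p.1 p.2.1 p.2.2 - Q p.1 p.2.1 p.2.2)^2 :=
    Finset.sum_congr rfl fun p _ => by ring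
  rw [hsum_eq] at mink
  have stepB : Real.sqrt (∑ p ∈ K, ξ p.1 p.2.1 p.2.2
        * (fk p.1 p.2.1 p.2.2 - Q p.1 p.2.1 p.2.2)^2)
      ≤ Real.sqrt c * norm2B (augDist μ β m) B
          (fun s x a => fk s x a - bellman P g R γ fkm1 s x a)
        + γ * norm2 (prodPolicy (pushforward P g ξ) π) (fun s x a => fkm1 s x a - Q s x a) :=
    le_trans mink (add_le_add stepD stepE)
  -- tail bound
  have stepTail : Real.sqrt (∑ s, ∑ x ∈ Bᶜ, ∑ a, ξ s x a * (fk s x a - Q s x a)^2)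
      ≤ Real.sqrt σ2 * Vmax := by
    have h1 : ∑ s, ∑ x ∈ Bᶜ, ∑ a, ξ s x a * (fk s x a - Q s x a)^2
        ≤ ∑ s, ∑ x ∈ Bᶜ, ∑ a, ξ s x a * Vmax^2 := by
      refine Finset.sum_le_sum fun s _ => Finset.sum_le_sum fun x _ =>
        Finset.sum_le_sum fun a _ => ?_
      have hab := abs_le.mp (hbd s x a)
      have hsq : (fk s x a - Q s x a)^2 ≤ Vmax^2 :=
        sq_le_sq' (by linarith [hab.1]) hab.2
      exact mul_le_mul_of_nonneg_left hsq (hξ0 s x a)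
    have h2 : ∑ s, ∑ x ∈ Bᶜ, ∑ a, ξ s x a * Vmax^2
        = (∑ s, ∑ x ∈ Bᶜ, ∑ a, ξ s x a) * Vmax^2 := by
      simp [Finset.sum_mul]
    have h3 : ∑ s, ∑ x ∈ Bᶜ, ∑ a, ξ s x a * Vmax^2 ≤ σ2 * Vmax^2 := by
      rw [h2]
      exact mul_le_mul_of_nonneg_right htail (sq_nonneg _)
    calc Real.sqrt (∑ s, ∑ x ∈ Bᶜ, ∑ a, ξ s x a * (fk s x a - Q s x a)^2)
        ≤ Real.sqrt (σ2 * Vmax^2) := Real.sqrt_le_sqrt (le_trans h1 h3)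
      _ = Real.sqrt σ2 * Vmax := by rw [Real.sqrt_mul hσ2, Real.sqrt_sq hV]
  -- assemble
  have hTB0 : 0 ≤ ∑ p ∈ K, ξ p.1 p.2.1 p.2.2 * (fk p.1 p.2.1 p.2.2 - Q p.1 p.2.1 p.2.2)^2 :=
    Finset.sum_nonneg fun p _ => mul_nonneg (hξ0 _ _ _) (sq_nonneg _)
  have hTC0 : 0 ≤ ∑ s, ∑ x ∈ Bᶜ, ∑ a, ξ s x a * (fk s x a - Q s x a)^2 :=
    Finset.sum_nonneg fun s _ => Finset.sum_nonneg fun x _ =>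
      Finset.sum_nonneg fun a _ => mul_nonneg (hξ0 _ _ _) (sq_nonneg _)
  have hsplit : ∑ s, ∑ x, ∑ a, ξ s x a * (fk s x a - Q s x a)^2
      = (∑ p ∈ K, ξ p.1 p.2.1 p.2.2 * (fk p.1 p.2.1 p.2.2 - Q p.1 p.2.1 p.2.2)^2)
        + ∑ s, ∑ x ∈ Bᶜ, ∑ a, ξ s x a * (fk s x a - Q s x a)^2 := by
    rw [← my_sum3B B (fun s x a => ξ s x a * (fk s x a - Q s x a)^2), ← Finset.sum_add_distrib]
    exact Finset.sum_congr rfl fun s _ => (Finset.sum_add_sum_compl B _).symm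
  calc norm2 ξ (fun s x a => fk s x a - Q s x a)
      = Real.sqrt ((∑ p ∈ K, ξ p.1 p.2.1 p.2.2
          * (fk p.1 p.2.1 p.2.2 - Q p.1 p.2.1 p.2.2)^2)
        + ∑ s, ∑ x ∈ Bᶜ, ∑ a, ξ s x a * (fk s x a - Q s x a)^2) := by
        simp only [norm2]
        rw [hsplit]
    _ ≤ Real.sqrt (∑ p ∈ K, ξ p.1 p.2.1 p.2.2
          * (fk p.1 p.2.1 p.2.2 - Q p.1 p.2.1 p.2.2)^2)
        + Real.sqrt (∑ s, ∑ x ∈ Bᶜ, ∑ a, ξ s x a * (fk s x a - Q s x a)^2) :=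
        my_sqrt_add_le _ _ hTB0 hTC0
    _ ≤ (Real.sqrt c * norm2B (augDist μ β m) B
          (fun s x a => fk s x a - bellman P g R γ fkm1 s x a)
        + γ * norm2 (prodPolicy (pushforward P g ξ) π) (fun s x a => fkm1 s x a - Q s x a))
        + Real.sqrt σ2 * Vmax := add_le_add stepB stepTail
    _ = _ := by rw [hc_def]
end

section
/- (Deterministic core of Theorem 1.) Let k ≥ 1, let f_0, …, f_k : S×X×A → ℝ, let μ be a distribution on S×X×A, let β_1, …, β_k be distributions on X, let B ⊆ X, let ξ be a distribution on S×X×A, and let Q* : S×X×A → ℝ satisfy Q* = T Q*. Let m be a positive integer and σ₁ > 0, σ₂ ≥ 0, c₀ ≥ 1, C ≥ 0, V_max ≥ 0, ε₁ ≥ 0. Define ξ⁰ := ξ and ξ^{i+1} := P(ξ^i) × π_{f_{k−1−i},Q*} for i = 0, …, k−1. Assume: (i) β_j(x) ≥ σ₁ for all x ∈ B and all j = 1,…,k; (ii) |f_j(s,x,a) − Q*(s,x,a)| ≤ V_max for all j = 0,…,k and all (s,x,a); (iii) for each i = 0,…,k−1, ξ^i(s,a) ≤ C·μ(s,a) for all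 (s,a) (marginals) and Σ_{(s,x,a): x∉B} ξ^i(s,x,a) ≤ c₀ σ₂; (iv) for each i = 0,…,k−1, ‖f_{k−i} − T f_{k−i−1}‖²_{2, μ̄_{β_{k−i}}, B} ≤ ε₁. Then ‖f_k − Q*‖_{2,ξ} ≤ ((1−γ^k)/(1−γ)) · ( sqrt((m+1) C ε₁ / (m σ₁)) + sqrt(c₀ σ₂) V_max ) + γ^k V_max. -/
open Finset

/-!
On the typical set `B`, coverage `β ≥ σ₁` and concentrability give
`ξ^i ≤ (m+1)C/(mσ₁) · μ̄_β` pointwise, so the fitting error of `f_{k-i}` against `T f_{k-i-1}`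
transfers from `μ̄_β` to `ξ^i`; off `B` the error is at most `V_max` on mass at most `c₀σ₂`.
Since `Q* = T Q*` and `π_{f,Q*}` minimises `min{f, Q*}`, `|V_f - V_{Q*}|` is bounded by
`|f - Q*|` at the selected action, and Jensen's inequality for `P(·|s,a)` yields
`‖T f - Q*‖_{2,ν} ≤ γ ‖f - Q*‖_{2,P(ν)×π}`. The errors `e_i = ‖f_{k-i} - Q*‖_{2,ξ^i}` thus satisfy
`e_i ≤ E + γ e_{i+1}` and `e_k ≤ V_max`, and unrolling gives the geometric bound.
-/

section WeightedNorm

variable {S X A : Type*} [Fintype S] [Fintype X] [Fintype A]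

section Embedding

variable [DecidableEq X]

/-- Its Euclidean norm is `norm2B ν B u`, so Minkowski's inequality for the weighted norms is
`norm_add_le`. -/
noncomputable def weightedVec (ν : S → X → A → ℝ) (B : Finset X) (u : S → X → A → ℝ) :
    EuclideanSpace ℝ (S × X × A) :=
  WithLp.toLp 2 fun p => if p.2.1 ∈ B then √(ν p.1 p.2.1 p.2.2) * u p.1 p.2.1 p.2.2 else 0

variable {ν : S → X → A → ℝ} (hν : ∀ s x a, 0 ≤ ν s x a)
include hν

lemma norm2B_eq_norm_weightedVec (B : Finset X) (u : S → X → A → ℝ) :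
    norm2B ν B u = ‖weightedVec ν B u‖ := by
  rw [EuclideanSpace.norm_eq, norm2B]
  congr 1
  simp only [weightedVec, Fintype.sum_prod_type, Real.norm_eq_abs, sq_abs, apply_ite (· ^ 2),
    mul_pow, Real.sq_sqrt (hν _ _ _)]
  refine Finset.sum_congr rfl fun s _ => ?_
  simp only [ne_eq, OfNat.ofNat_ne_zero, not_false_eq_true, zero_pow, Finset.sum_ite_irrel,
    Finset.sum_const_zero, Finset.sum_ite_mem, Finset.univ_inter]

lemma norm2B_sub_le_norm2B_sub_add_norm2B_sub (B : Finset X) (u v w : S → X → A → ℝ) :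
    norm2B ν B (fun s x a => u s x a - w s x a)
      ≤ norm2B ν B (fun s x a => u s x a - v s x a)
        + norm2B ν B (fun s x a => v s x a - w s x a) := by
  simp only [norm2B_eq_norm_weightedVec hν]
  refine (congrArg norm ?_).trans_le (norm_add_le _ _)
  ext p
  simp only [weightedVec, PiLp.add_apply]
  split_ifs <;> ring

lemma norm2_le_norm2B_add_norm2B_compl (B : Finset X) (u : S → X → A → ℝ) :
    norm2 ν u ≤ norm2B ν B u + norm2B ν Bᶜ u := by
  change norm2B ν univ u ≤ _
  simp only [norm2B_eq_norm_weightedVec hν]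
  refine (congrArg norm ?_).trans_le (norm_add_le _ _)
  ext p
  by_cases hp : p.2.1 ∈ B <;> simp [weightedVec, hp]

end Embedding

variable {ν : S → X → A → ℝ} (hν : ∀ s x a, 0 ≤ ν s x a)
include hν

lemma norm2B_le_norm2 (B : Finset X) (u : S → X → A → ℝ) : norm2B ν B u ≤ norm2 ν u :=
  Real.sqrt_le_sqrt <| sum_le_sum fun s _ => sum_le_sum_of_subset_of_nonneg (subset_univ B)
    fun x _ _ => sum_nonneg fun a _ => mul_nonneg (hν s x a) (sq_nonneg _)

omit [Fintype X] in
lemma norm2B_le_sqrt_mass_mul {V : ℝ} (hV : 0 ≤ V) (B : Finset X) {u : S → X → A → ℝ}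
    (hu : ∀ s x a, |u s x a| ≤ V) :
    norm2B ν B u ≤ √(∑ s, ∑ x ∈ B, ∑ a, ν s x a) * V := by
  rw [norm2B, ← Real.sqrt_sq hV, ← Real.sqrt_mul' _ (sq_nonneg V)]
  refine Real.sqrt_le_sqrt ?_
  simp only [sum_mul]
  refine sum_le_sum fun s _ => sum_le_sum fun x _ => sum_le_sum fun a _ =>
    mul_le_mul_of_nonneg_left ?_ (hν s x a)
  exact sq_le_sq' (abs_le.1 (hu s x a)).1 (abs_le.1 (hu s x a)).2

omit [Fintype X] hν in
lemma norm2B_le_sqrt_mul_norm2B {ν' : S → X → A → ℝ} {K : ℝ} (hK : 0 ≤ K) (B : Finset X)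
    (hle : ∀ s, ∀ x ∈ B, ∀ a, ν s x a ≤ K * ν' s x a) (u : S → X → A → ℝ) :
    norm2B ν B u ≤ √K * norm2B ν' B u := by
  rw [norm2B, norm2B, ← Real.sqrt_mul hK]
  refine Real.sqrt_le_sqrt ?_
  simp only [mul_sum]
  refine sum_le_sum fun s _ => sum_le_sum fun x hx => sum_le_sum fun a _ => ?_
  rw [← mul_assoc]
  exact mul_le_mul_of_nonneg_right (hle s x hx a) (sq_nonneg _)

end WeightedNorm

lemma abs_inf'_sub_inf'_le {ι : Type*} {t : Finset ι} (ht : t.Nonempty) {f q : ι → ℝ} {c : ι}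
    (hc : c ∈ t) (hmin : ∀ a ∈ t, min (f c) (q c) ≤ min (f a) (q a)) :
    |t.inf' ht f - t.inf' ht q| ≤ |f c - q c| := by
  have hf : min (f c) (q c) ≤ t.inf' ht f :=
    le_inf' _ _ fun a ha => (hmin a ha).trans (min_le_left _ _)
  have hq : min (f c) (q c) ≤ t.inf' ht q :=
    le_inf' _ _ fun a ha => (hmin a ha).trans (min_le_right _ _)
  have hfc := inf'_le f hc
  have hqc := inf'_le q hc
  rw [abs_sub_le_iff]
  rcases le_total (f c) (q c) with h | h
  · rw [min_eq_left h] at hf hq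
    constructor <;> linarith [le_abs_self (f c - q c), neg_abs_le (f c - q c)]
  · rw [min_eq_right h] at hf hq
    constructor <;> linarith [le_abs_self (f c - q c), neg_abs_le (f c - q c)]

lemma abs_Vmin_sub_Vmin_le {S X A : Type*} [Fintype A] [Nonempty A] {f f' : S → X → A → ℝ}
    {π : S → X → A} (hπ : IsMinSelection f f' π) (s : S) (x : X) :
    |Vmin f s x - Vmin f' s x| ≤ |f s x (π s x) - f' s x (π s x)| :=
  abs_inf'_sub_inf'_le _ (mem_univ _) fun a _ => hπ s x a

section Pushforward

variable {S X A : Type*} [Fintype S] [Fintype X] [Fintype A] [DecidableEq X] [DecidableEq A]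

lemma sum_prodPolicy_pushforward_mul (P : S → A → S → ℝ) (g : S → X → A → S → X)
    (ν : S → X → A → ℝ) (π : S → X → A) (φ : S → X → A → ℝ) :
    ∑ s', ∑ x', ∑ a', prodPolicy (pushforward P g ν) π s' x' a' * φ s' x' a'
      = ∑ s, ∑ x, ∑ a, ν s x a * ∑ s', P s a s' * φ s' (g s x a s') (π s' (g s x a s')) := by
  simp only [prodPolicy, pushforward, mul_ite, ite_mul, mul_one, mul_zero, zero_mul,
    sum_ite_eq', mem_univ, if_true, sum_mul]
  calc _ = ∑ s', ∑ s, ∑ x, ∑ a, ν s x a * P s a s' * φ s' (g s x a s') (π s' (g s x a s')) := by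
        refine sum_congr rfl fun s' _ => ?_
        rw [sum_comm]; refine sum_congr rfl fun s _ => ?_
        rw [sum_comm]; refine sum_congr rfl fun x _ => ?_
        rw [sum_comm]; simp
    _ = _ := by
        rw [sum_comm]; refine sum_congr rfl fun s _ => ?_
        rw [sum_comm]; refine sum_congr rfl fun x _ => ?_
        rw [sum_comm]; refine sum_congr rfl fun a _ => ?_
        rw [mul_sum]
        exact sum_congr rfl fun s' _ => by ring

lemma isDist3_prodPolicy_pushforward {P : S → A → S → ℝ} (hP : IsKernel P)
    (g : S → X → A → S → X) {ν : S → X → A → ℝ} (hν : IsDist3 ν) (π : S → X → A) :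
    IsDist3 (prodPolicy (pushforward P g ν) π) := by
  refine ⟨fun s x a => mul_nonneg ?_ (by split_ifs <;> norm_num), ?_⟩
  · exact sum_nonneg fun s _ => sum_nonneg fun x _ => sum_nonneg fun a _ =>
      mul_nonneg (mul_nonneg (hν.1 _ _ _) (hP.1 _ _ _)) (by split_ifs <;> norm_num)
  · simpa [hP.2, hν.2] using sum_prodPolicy_pushforward_mul P g ν π 1

end Pushforward

section Contraction

variable {S X A : Type*} [Fintype S] [Fintype X] [Fintype A] [Nonempty A]
  (P : S → A → S → ℝ) (g : S → X → A → S → X) (R : S → X → A → ℝ) (γ : ℝ)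

omit [Fintype X] in
lemma bellman_sub_bellman (f f' : S → X → A → ℝ) (s : S) (x : X) (a : A) :
    bellman P g R γ f s x a - bellman P g R γ f' s x a
      = γ * ∑ s', P s a s' * (Vmin f s' (g s x a s') - Vmin f' s' (g s x a s')) := by
  simp only [bellman, mul_sub, sum_sub_distrib]
  ring

variable {P}

omit [Fintype X] in
lemma sq_bellman_sub_bellman_le (hP : IsKernel P) {f f' : S → X → A → ℝ} {π : S → X → A}
    (hπ : IsMinSelection f f' π) (s : S) (x : X) (a : A) :
    (bellman P g R γ f s x a - bellman P g R γ f' s x a) ^ 2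
      ≤ γ ^ 2 * ∑ s', P s a s' * (f s' (g s x a s') (π s' (g s x a s'))
          - f' s' (g s x a s') (π s' (g s x a s'))) ^ 2 := by
  rw [bellman_sub_bellman, mul_pow]
  gcongr
  have hJensen := (even_two.convexOn_pow (𝕜 := ℝ)).map_sum_le (t := univ) (w := P s a)
    (p := fun s' => Vmin f s' (g s x a s') - Vmin f' s' (g s x a s'))
    (fun s' _ => hP.1 s a s') (hP.2 s a) (fun _ _ => Set.mem_univ _)
  simp only [smul_eq_mul] at hJensen
  refine hJensen.trans (sum_le_sum fun s' _ => mul_le_mul_of_nonneg_left ?_ (hP.1 s a s'))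
  exact sq_le_sq.2 (abs_Vmin_sub_Vmin_le hπ _ _)

variable {γ} [DecidableEq X] [DecidableEq A]

lemma norm2_bellman_sub_fixedPoint_le (hP : IsKernel P) (hγ : 0 ≤ γ) {ν : S → X → A → ℝ}
    (hν : ∀ s x a, 0 ≤ ν s x a) {f Q : S → X → A → ℝ}
    (hQ : ∀ s x a, Q s x a = bellman P g R γ Q s x a) {π : S → X → A}
    (hπ : IsMinSelection f Q π) :
    norm2 ν (fun s x a => bellman P g R γ f s x a - Q s x a)
      ≤ γ * norm2 (prodPolicy (pushforward P g ν) π) (fun s x a => f s x a - Q s x a) := by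
  rw [norm2, norm2, sum_prodPolicy_pushforward_mul]
  conv_rhs => rw [← Real.sqrt_sq hγ, ← Real.sqrt_mul (sq_nonneg γ)]
  refine Real.sqrt_le_sqrt ?_
  simp only [mul_sum]
  refine sum_le_sum fun s _ => sum_le_sum fun x _ => sum_le_sum fun a _ => ?_
  have h := sq_bellman_sub_bellman_le g R γ hP hπ s x a
  rw [← hQ s x a] at h
  calc ν s x a * (bellman P g R γ f s x a - Q s x a) ^ 2
      ≤ ν s x a * (γ ^ 2 * ∑ s', P s a s' * (f s' (g s x a s') (π s' (g s x a s'))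
          - Q s' (g s x a s') (π s' (g s x a s'))) ^ 2) := mul_le_mul_of_nonneg_left h (hν s x a)
    _ = _ := by simp only [mul_sum]; exact sum_congr rfl fun _ _ => by ring

end Contraction

section FittedQIteration

variable {S X A : Type*} [Fintype S] [Fintype X] [Fintype A]

omit [Fintype S] [Fintype A] in
lemma le_mul_augDist {μ ν : S → X → A → ℝ} (hμ : ∀ s x a, 0 ≤ μ s x a)
    (hν : ∀ s x a, 0 ≤ ν s x a) {β : X → ℝ} {m : ℕ} (hm : 0 < m) {σ C : ℝ} (hσ : 0 < σ)
    (hC : 0 ≤ C) (hmarg : ∀ s a, marginal ν s a ≤ C * marginal μ s a) {x : X} (hx : σ ≤ β x)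
    (s : S) (a : A) :
    ν s x a ≤ ((m : ℝ) + 1) * C / ((m : ℝ) * σ) * augDist μ β m s x a := by
  have hm' : (0 : ℝ) < m := Nat.cast_pos.2 hm
  have hμsa : 0 ≤ marginal μ s a := sum_nonneg fun x _ => hμ s x a
  calc ν s x a ≤ marginal ν s a := single_le_sum (fun x _ => hν s x a) (mem_univ x)
    _ ≤ C * marginal μ s a := hmarg s a
    _ = ((m : ℝ) + 1) * C / ((m : ℝ) * σ) * ((m / ((m : ℝ) + 1)) * marginal μ s a * σ) := by
        field_simp
    _ ≤ ((m : ℝ) + 1) * C / ((m : ℝ) * σ) * augDist μ β m s x a := by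
        rw [augDist]
        gcongr
        exact le_add_of_nonneg_of_le (by positivity [hμ s x a]) (by gcongr)

variable [Nonempty A] [DecidableEq X] [DecidableEq A] {P : S → A → S → ℝ}
  {g : S → X → A → S → X} {R : S → X → A → ℝ} {γ : ℝ}

theorem norm2_sub_fixedPoint_le_of_fit (hP : IsKernel P) (hγ : 0 ≤ γ)
    {μ ν : S → X → A → ℝ} (hμ : ∀ s x a, 0 ≤ μ s x a) (hν : ∀ s x a, 0 ≤ ν s x a)
    {Q f f' : S → X → A → ℝ} (hQ : ∀ s x a, Q s x a = bellman P g R γ Q s x a)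
    {π : S → X → A} (hπ : IsMinSelection f' Q π) {β : X → ℝ} {B : Finset X} {m : ℕ}
    (hm : 0 < m) {σ1 σ2 c0 C Vmax ε1 : ℝ} (hσ1 : 0 < σ1) (hC : 0 ≤ C) (hV : 0 ≤ Vmax)
    (hβ : ∀ x ∈ B, σ1 ≤ β x) (hfbd : ∀ s x a, |f s x a - Q s x a| ≤ Vmax)
    (hmarg : ∀ s a, marginal ν s a ≤ C * marginal μ s a)
    (hatyp : ∑ s, ∑ x ∈ Bᶜ, ∑ a, ν s x a ≤ c0 * σ2)
    (hfit : (norm2B (augDist μ β m) B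
        (fun s x a => f s x a - bellman P g R γ f' s x a)) ^ 2 ≤ ε1) :
    norm2 ν (fun s x a => f s x a - Q s x a)
      ≤ (√(((m : ℝ) + 1) * C * ε1 / ((m : ℝ) * σ1)) + √(c0 * σ2) * Vmax)
        + γ * norm2 (prodPolicy (pushforward P g ν) π) (fun s x a => f' s x a - Q s x a) := by
  have hK : 0 ≤ ((m : ℝ) + 1) * C / ((m : ℝ) * σ1) := by positivity
  have hfitB : norm2B ν B (fun s x a => f s x a - bellman P g R γ f' s x a)
      ≤ √(((m : ℝ) + 1) * C * ε1 / ((m : ℝ) * σ1)) := by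
    rw [mul_div_right_comm, Real.sqrt_mul hK]
    refine (norm2B_le_sqrt_mul_norm2B (ν' := augDist μ β m) hK B (fun s x hx a => ?_) _).trans ?_
    · exact le_mul_augDist hμ hν hm hσ1 hC hmarg (hβ x hx) s a
    · exact mul_le_mul_of_nonneg_left ((le_abs_self _).trans (Real.abs_le_sqrt hfit))
        (Real.sqrt_nonneg _)
  have hatypB : norm2B ν Bᶜ (fun s x a => f s x a - Q s x a) ≤ √(c0 * σ2) * Vmax :=
    (norm2B_le_sqrt_mass_mul hν hV Bᶜ hfbd).trans (by gcongr)
  have hcontr := (norm2B_le_norm2 hν B _).trans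
    (norm2_bellman_sub_fixedPoint_le g R hP hγ hν hQ hπ)
  calc norm2 ν (fun s x a => f s x a - Q s x a)
      ≤ norm2B ν B (fun s x a => f s x a - Q s x a)
        + norm2B ν Bᶜ (fun s x a => f s x a - Q s x a) :=
        norm2_le_norm2B_add_norm2B_compl hν B _
    _ ≤ (norm2B ν B (fun s x a => f s x a - bellman P g R γ f' s x a)
          + norm2B ν B (fun s x a => bellman P g R γ f' s x a - Q s x a))
        + √(c0 * σ2) * Vmax :=
        add_le_add (norm2B_sub_le_norm2B_sub_add_norm2B_sub hν B _ _ _) hatypB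
    _ ≤ _ := by linarith

end FittedQIteration

lemma le_geom_sum_of_le_add_mul {d : ℕ → ℝ} {k : ℕ} {E γ V : ℝ} (hγ : 0 ≤ γ) (hk : d k ≤ V)
    (hstep : ∀ i < k, d i ≤ E + γ * d (i + 1)) :
    d 0 ≤ (∑ j ∈ range k, γ ^ j) * E + γ ^ k * V := by
  suffices h : ∀ n ≤ k, d (k - n) ≤ (∑ j ∈ range n, γ ^ j) * E + γ ^ n * V by
    simpa using h k le_rfl
  intro n
  induction n with
  | zero => simpa using hk
  | succ n ih =>
    intro hn
    have h := hstep (k - (n + 1)) (by omega)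
    rw [show k - (n + 1) + 1 = k - n by omega] at h
    calc d (k - (n + 1)) ≤ E + γ * ((∑ j ∈ range n, γ ^ j) * E + γ ^ n * V) :=
          h.trans (by gcongr; exact ih (by omega))
      _ = _ := by rw [geom_sum_succ]; ring

theorem statement13_general {S X A : Type*} [Fintype S] [Fintype X] [Fintype A]
    [Nonempty A] [DecidableEq X] [DecidableEq A]
    (P : S → A → S → ℝ) (g : S → X → A → S → X) (R : S → X → A → ℝ) (γ : ℝ)
    (hP : IsKernel P) (hγ0 : 0 ≤ γ) (hγ1 : γ < 1)
    (k : ℕ)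
    (fseq : ℕ → S → X → A → ℝ)
    (μ : S → X → A → ℝ) (hμ : IsDist3 μ)
    (βs : ℕ → X → ℝ)
    (B : Finset X)
    (ξ : S → X → A → ℝ) (hξ : IsDist3 ξ)
    (Q : S → X → A → ℝ) (hQ : ∀ s x a, Q s x a = bellman P g R γ Q s x a)
    (m : ℕ) (hm : 0 < m)
    (σ1 σ2 c0 C Vmax ε1 : ℝ)
    (hσ1 : 0 < σ1) (hC : 0 ≤ C) (hV : 0 ≤ Vmax)
    -- a fixed selection `π_{f,f'} ∈ argmin_a min{f,f'}` for every pair of functions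
    (πsel : (S → X → A → ℝ) → (S → X → A → ℝ) → S → X → A)
    (hπsel : ∀ f f', IsMinSelection f f' (πsel f f'))
    -- the sequence ξ⁰ = ξ, ξ^{i+1} = P(ξ^i) × π_{f_{k−1−i},Q*}
    (ξseq : ℕ → S → X → A → ℝ)
    (hξ0 : ξseq 0 = ξ)
    (hξsucc : ∀ i < k, ξseq (i + 1)
      = prodPolicy (pushforward P g (ξseq i)) (πsel (fseq (k - 1 - i)) Q))
    -- (i) virtual-sample coverage of the typical set
    (hβcov : ∀ j, 1 ≤ j → j ≤ k → ∀ x ∈ B, σ1 ≤ βs j x)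
    -- (ii) uniform boundedness of `f_j − Q*`
    (hfbd : ∀ j ≤ k, ∀ s x a, |fseq j s x a - Q s x a| ≤ Vmax)
    -- (iii) concentrability and small atypical mass of each ξ^i
    (hconc : ∀ i < k, (∀ s a, marginal (ξseq i) s a ≤ C * marginal μ s a)
      ∧ ∑ s, ∑ x ∈ Bᶜ, ∑ a, ξseq i s x a ≤ c0 * σ2)
    -- (iv) per-iteration fitting error
    (hfit : ∀ i < k, (norm2B (augDist μ (βs (k - i)) m) B
        (fun s x a => fseq (k - i) s x a
          - bellman P g R γ (fseq (k - i - 1)) s x a)) ^ 2 ≤ ε1) :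
    norm2 ξ (fun s x a => fseq k s x a - Q s x a)
      ≤ ((1 - γ ^ k) / (1 - γ))
          * (Real.sqrt (((m : ℝ) + 1) * C * ε1 / ((m : ℝ) * σ1))
              + Real.sqrt (c0 * σ2) * Vmax)
        + γ ^ k * Vmax := by
  have hdist : ∀ i ≤ k, IsDist3 (ξseq i) := by
    intro i
    induction i with
    | zero => exact fun _ => hξ0 ▸ hξ
    | succ i ih =>
      intro hi
      rw [hξsucc i hi]
      exact isDist3_prodPolicy_pushforward hP g (ih (Nat.le_of_succ_le hi)) _
  have hlast : norm2 (ξseq k) (fun s x a => fseq (k - k) s x a - Q s x a) ≤ Vmax := by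
    have h := norm2B_le_sqrt_mass_mul (hdist k le_rfl).1 hV univ (hfbd (k - k) (Nat.sub_le k k))
    rwa [(hdist k le_rfl).2, Real.sqrt_one, one_mul] at h
  have hstep : ∀ i < k, norm2 (ξseq i) (fun s x a => fseq (k - i) s x a - Q s x a)
      ≤ (√(((m : ℝ) + 1) * C * ε1 / ((m : ℝ) * σ1)) + √(c0 * σ2) * Vmax)
        + γ * norm2 (ξseq (i + 1)) (fun s x a => fseq (k - (i + 1)) s x a - Q s x a) := by
    intro i hi
    rw [hξsucc i hi, Nat.sub_sub, Nat.add_comm 1 i, ← Nat.sub_sub]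
    exact norm2_sub_fixedPoint_le_of_fit hP hγ0 hμ.1 (hdist i hi.le).1 hQ (hπsel _ Q) hm hσ1 hC hV
      (hβcov (k - i) (by omega) (by omega)) (hfbd (k - i) (by omega)) (hconc i hi).1
      (hconc i hi).2 (hfit i hi)
  have hgeom : ∑ j ∈ range k, γ ^ j = (1 - γ ^ k) / (1 - γ) := by
    rw [geom_sum_eq hγ1.ne, ← neg_div_neg_eq, neg_sub, neg_sub]
  simpa [hξ0, hgeom] using le_geom_sum_of_le_add_mul hγ0 hlast hstep

/-- deterministic core of Theorem 1: iterating the per-step error bound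
yields `‖f_k − Q*‖_{2,ξ} ≤ ((1−γ^k)/(1−γ)) (sqrt((m+1)Cε₁/(mσ₁)) + sqrt(c₀σ₂) V_max) + γ^k V_max`. -/
theorem statement13 {S X A : Type*} [Fintype S] [Fintype X] [Fintype A]
    [Nonempty S] [Nonempty X] [Nonempty A] [DecidableEq X] [DecidableEq A]
    (P : S → A → S → ℝ) (g : S → X → A → S → X) (R : S → X → A → ℝ) (γ : ℝ)
    (hP : IsKernel P) (hγ0 : 0 ≤ γ) (hγ1 : γ < 1)
    (k : ℕ) (hk : 1 ≤ k)
    (fseq : ℕ → S → X → A → ℝ)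
    (μ : S → X → A → ℝ) (hμ : IsDist3 μ)
    (βs : ℕ → X → ℝ) (hβdist : ∀ j, 1 ≤ j → j ≤ k → IsDist1 (βs j))
    (B : Finset X)
    (ξ : S → X → A → ℝ) (hξ : IsDist3 ξ)
    (Q : S → X → A → ℝ) (hQ : ∀ s x a, Q s x a = bellman P g R γ Q s x a)
    (m : ℕ) (hm : 0 < m)
    (σ1 σ2 c0 C Vmax ε1 : ℝ)
    (hσ1 : 0 < σ1) (hσ2 : 0 ≤ σ2) (hc0 : 1 ≤ c0) (hC : 0 ≤ C) (hV : 0 ≤ Vmax) (hε1 : 0 ≤ ε1)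
    -- a fixed selection `π_{f,f'} ∈ argmin_a min{f,f'}` for every pair of functions
    (πsel : (S → X → A → ℝ) → (S → X → A → ℝ) → S → X → A)
    (hπsel : ∀ f f', IsMinSelection f f' (πsel f f'))
    -- the sequence ξ⁰ = ξ, ξ^{i+1} = P(ξ^i) × π_{f_{k−1−i},Q*}
    (ξseq : ℕ → S → X → A → ℝ)
    (hξ0 : ξseq 0 = ξ)
    (hξsucc : ∀ i < k, ξseq (i + 1)
      = prodPolicy (pushforward P g (ξseq i)) (πsel (fseq (k - 1 - i)) Q))
    -- (i) virtual-sample coverage of the typical set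
    (hβcov : ∀ j, 1 ≤ j → j ≤ k → ∀ x ∈ B, σ1 ≤ βs j x)
    -- (ii) uniform boundedness of `f_j − Q*`
    (hfbd : ∀ j ≤ k, ∀ s x a, |fseq j s x a - Q s x a| ≤ Vmax)
    -- (iii) concentrability and small atypical mass of each ξ^i
    (hconc : ∀ i < k, (∀ s a, marginal (ξseq i) s a ≤ C * marginal μ s a)
      ∧ ∑ s, ∑ x ∈ Bᶜ, ∑ a, ξseq i s x a ≤ c0 * σ2)
    -- (iv) per-iteration fitting error
    (hfit : ∀ i < k, (norm2B (augDist μ (βs (k - i)) m) B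
        (fun s x a => fseq (k - i) s x a
          - bellman P g R γ (fseq (k - i - 1)) s x a)) ^ 2 ≤ ε1) :
    norm2 ξ (fun s x a => fseq k s x a - Q s x a)
      ≤ ((1 - γ ^ k) / (1 - γ))
          * (Real.sqrt (((m : ℝ) + 1) * C * ε1 / ((m : ℝ) * σ1))
              + Real.sqrt (c0 * σ2) * Vmax)
        + γ ^ k * Vmax :=
  statement13_general P g R γ hP hγ0 hγ1 k fseq μ hμ βs B ξ hξ Q hQ m hm σ1 σ2 c0 C Vmax ε1 hσ1 hC
    hV πsel hπsel ξseq hξ0 hξsucc hβcov hfbd hconc hfit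
end
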